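/- arXiv:2512.24907 — 3 statements merged into one kernel-verified Lean document; each statement's English description precedes it below -/
import Mathlib

section
/- Let y ∈ (0, 1/8], and let G be a graph such that no subset S ⊆ V(G) satisfies both χ(S) ≥ y·χ(G) and G[S] is anticonnected. Then G contains a complete blockade (B_1, …, B_k) with k ≥ y^{-1/2} and χ(B_i) ≥ y·χ(G) for all i ∈ [k]. -/
open SimpleGraph

/-- The chromatic number of the subgraph of `G` induced on `S`, as a natural number. -/
noncomputable def chiS {V : Type*} [Fintype V] (G : SimpleGraph V) (S : Set V) : ℕ :=
  (G.induce S).chromaticNumber.toNat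

/-!
The anticomponents of `G` (vertex sets of the components of `Gᶜ`) are pairwise complete to each
other, and by hypothesis each has chromatic number below `t = y χ(G)`. Scanning them in any order
and closing the current group as soon as its chromatic number reaches `t` yields disjoint,
pairwise complete blocks with `t ≤ χ(B) < 2t`, plus a remainder with `χ < t`. Subadditivity of `χ`
under unions gives `χ(G) < t (2k + 1)`, i.e. `k > (1/y - 1)/2`, which is at least `y^(-1/2)`
once `y ≤ 1/8`.
-/

open Finset

section Greedy

variable {ι : Type*} [DecidableEq ι] {f : Finset ι → ℝ}

theorem le_add_sum_of_subadditive (hf : ∀ s u, f (s ∪ u) ≤ f s + f u) (R : Finset ι)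
    (P : Finset (Finset ι)) : f (R ∪ P.sup id) ≤ f R + ∑ p ∈ P, f p := by
  induction P using Finset.induction_on with
  | empty => simp
  | insert q P hq ih =>
    rw [sup_insert, sum_insert hq, id, sup_eq_union, union_left_comm]
    linarith [hf q (R ∪ P.sup id)]

theorem exists_blocks_and_remainder_of_subadditive {t : ℝ}
    (hf : ∀ s u, f (s ∪ u) ≤ f s + f u) (hempty : f ∅ < t) (hsingleton : ∀ i, f {i} < t)
    (s : Finset ι) :
    ∃ (P : Finset (Finset ι)) (R : Finset ι), (P : Set (Finset ι)).PairwiseDisjoint id ∧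
      Disjoint R (P.sup id) ∧ R ∪ P.sup id = s ∧ (∀ p ∈ P, t ≤ f p ∧ f p < 2 * t) ∧
      f R < t := by
  induction s using Finset.induction_on with
  | empty => exact ⟨∅, ∅, by simp, by simp, by simp, by simp, hempty⟩
  | insert a s ha ih =>
    obtain ⟨P, R, hP, hRP, rfl, hPf, hR⟩ := ih
    have haP : a ∉ P.sup id := fun h => ha (mem_union_right _ h)
    have hR' : Disjoint (insert a R) (P.sup id) := disjoint_insert_left.mpr ⟨haP, hRP⟩
    by_cases hlt : f (insert a R) < t
    · exact ⟨P, insert a R, hP, hR', insert_union _ _ _, hPf, hlt⟩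
    refine ⟨insert (insert a R) P, ∅, ?_, by simp, by simp [insert_union], ?_, hempty⟩
    · rw [coe_insert]
      exact hP.insert fun p hp _ => hR'.mono_right (le_sup (f := id) hp)
    · rintro p hp
      rcases mem_insert.mp hp with rfl | hp
      · refine ⟨not_lt.mp hlt, ?_⟩
        rw [insert_eq]
        linarith [hf {a} R, hsingleton a]
      · exact hPf p hp

theorem exists_pairwiseDisjoint_le_of_subadditive {t : ℝ} (hf : ∀ s u, f (s ∪ u) ≤ f s + f u)
    (hempty : f ∅ < t) (hsingleton : ∀ i, f {i} < t) (s : Finset ι) :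
    ∃ P : Finset (Finset ι), (P : Set (Finset ι)).PairwiseDisjoint id ∧ (∀ p ∈ P, t ≤ f p) ∧
      f s < t * (2 * #P + 1) := by
  obtain ⟨P, R, hP, -, rfl, hPf, hR⟩ :=
    exists_blocks_and_remainder_of_subadditive hf hempty hsingleton s
  refine ⟨P, hP, fun p hp => (hPf p hp).1, ?_⟩
  have hsum : ∑ p ∈ P, f p ≤ #P • (2 * t) := sum_le_card_nsmul _ _ _ fun p hp => (hPf p hp).2.le
  rw [nsmul_eq_mul] at hsum
  linarith [le_add_sum_of_subadditive hf R P]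

end Greedy

theorem rpow_neg_half_le_of_one_lt_mul {y k : ℝ} (hy0 : 0 < y) (hy : y ≤ 1 / 8)
    (hk : 1 < y * (2 * k + 1)) : y ^ (-(1 / 2 : ℝ)) ≤ k := by
  set s := Real.sqrt y
  have hs : 0 < s := Real.sqrt_pos.mpr hy0
  have hsy : s ^ 2 = y := Real.sq_sqrt hy0.le
  have hs_le : s ≤ 2 / 5 := by nlinarith
  -- `2 s² k > 1 - s² ≥ 2 s`, the second inequality holding for `s ≤ √2 - 1`.
  rw [Real.rpow_neg hy0.le, ← Real.sqrt_eq_rpow, inv_le_iff_one_le_mul₀' hs]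
  by_contra! hsk
  nlinarith [mul_pos hs (sub_pos.mpr hsk)]

section Chromatic

variable {V : Type*} [Fintype V] (G : SimpleGraph V)

theorem colorable_chiS (S : Set V) : (G.induce S).Colorable (chiS G S) :=
  colorable_chromaticNumber_of_fintype _

variable {G} in
theorem chiS_le_of_colorable {S : Set V} {n : ℕ} (h : (G.induce S).Colorable n) : chiS G S ≤ n :=
  ENat.toNat_le_of_le_natCast h.chromaticNumber_le

@[simp] theorem chiS_empty : chiS G ∅ = 0 :=
  Nat.le_zero.mp <| chiS_le_of_colorable <| .of_isEmpty 0

theorem chiS_union_le (X Y : Set V) : chiS G (X ∪ Y) ≤ chiS G X + chiS G Y := by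
  classical
  obtain ⟨cX⟩ := colorable_chiS G X
  obtain ⟨cY⟩ := colorable_chiS G Y
  let c : (G.induce (X ∪ Y)).Coloring (Fin (chiS G X) ⊕ Fin (chiS G Y)) :=
    Coloring.mk (fun v => if hv : v.1 ∈ X then .inl (cX ⟨v, hv⟩)
      else .inr (cY ⟨v, v.2.resolve_left hv⟩)) fun {v w} hvw => by
        split_ifs with hv hw hw
        · exact fun h => cX.valid (show (G.induce X).Adj ⟨v, hv⟩ ⟨w, hw⟩ from hvw)
            (Sum.inl_injective h)
        · exact Sum.inl_ne_inr
        · exact Sum.inr_ne_inl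
        · exact fun h => cY.valid
            (show (G.induce Y).Adj ⟨v, v.2.resolve_left hv⟩ ⟨w, w.2.resolve_left hw⟩ from hvw)
            (Sum.inr_injective h)
  simpa using chiS_le_of_colorable c.colorable

end Chromatic

section Anticomponents

variable {V : Type*} (G : SimpleGraph V)

theorem induce_compl (s : Set V) : (G.induce s)ᶜ = Gᶜ.induce s := by
  ext a b
  simp [Subtype.coe_ne_coe]

theorem connected_compl_induce_supp (C : Gᶜ.ConnectedComponent) :
    ((G.induce C.supp)ᶜ).Connected := by
  rw [induce_compl]
  exact C.connected_toSimpleGraph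

variable {G}

theorem adj_of_mem_supp_of_ne {C D : Gᶜ.ConnectedComponent} (hCD : C ≠ D) {a b : V}
    (ha : a ∈ C.supp) (hb : b ∈ D.supp) : G.Adj a b := by
  by_contra h
  have hab : a ≠ b := fun hab => hCD (ConnectedComponent.eq_of_common_vertex ha (hab ▸ hb))
  rw [ConnectedComponent.mem_supp_iff] at ha hb
  exact hCD (ha ▸ hb ▸ ConnectedComponent.connectedComponentMk_eq_of_adj ⟨hab, h⟩)

theorem adj_of_mem_biUnion_supp {p q : Finset Gᶜ.ConnectedComponent} (hpq : Disjoint p q)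
    {a b : V} (ha : a ∈ ⋃ C ∈ p, C.supp) (hb : b ∈ ⋃ C ∈ q, C.supp) : G.Adj a b := by
  simp only [Set.mem_iUnion, exists_prop] at ha hb
  obtain ⟨C, hCp, haC⟩ := ha
  obtain ⟨D, hDq, hbD⟩ := hb
  exact adj_of_mem_supp_of_ne (by rintro rfl; exact Finset.disjoint_left.mp hpq hCp hDq) haC hbD

theorem disjoint_biUnion_supp {p q : Finset Gᶜ.ConnectedComponent} (hpq : Disjoint p q) :
    Disjoint (⋃ C ∈ p, C.supp) (⋃ C ∈ q, C.supp) :=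
  Set.disjoint_left.mpr fun _ ha hb => G.irrefl (adj_of_mem_biUnion_supp hpq ha hb)

end Anticomponents

theorem stmt_3 {V : Type*} [Fintype V] (G : SimpleGraph V)
    (y : ℝ) (hy0 : 0 < y) (hy : y ≤ 1 / 8)
    (hno : ¬ ∃ S : Set V,
      y * (chiS G Set.univ : ℝ) ≤ (chiS G S : ℝ) ∧ ((G.induce S)ᶜ).Connected) :
    ∃ (k : ℕ) (B : Fin k → Set V),
      y ^ (-(1/2 : ℝ)) ≤ (k : ℝ) ∧
      (∀ i j, i ≠ j → Disjoint (B i) (B j)) ∧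
      (∀ i j, i ≠ j → ∀ a ∈ B i, ∀ b ∈ B j, G.Adj a b) ∧
      ∀ i, y * (chiS G Set.univ : ℝ) ≤ (chiS G (B i) : ℝ) := by
  classical
  rcases Nat.eq_zero_or_pos (chiS G Set.univ) with hc | hc
  · exact ⟨⌈y ^ (-(1 / 2 : ℝ))⌉₊, fun _ => ∅, Nat.le_ceil _, by simp, by simp, by simp [hc]⟩
  set f : Finset Gᶜ.ConnectedComponent → ℝ := fun p => chiS G (⋃ C ∈ p, C.supp)
  have hf (p q) : f (p ∪ q) ≤ f p + f q := by
    simp only [f, Finset.set_biUnion_union]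
    exact_mod_cast chiS_union_le G _ _
  have ht : 0 < y * chiS G Set.univ := by positivity
  have hsingleton (C) : f {C} < y * chiS G Set.univ := by
    simpa [f] using fun h => hno ⟨C.supp, h, connected_compl_induce_supp G C⟩
  obtain ⟨P, hP, hPt, hlt⟩ :=
    exists_pairwiseDisjoint_le_of_subadditive hf (by simpa [f] using ht) hsingleton univ
  have hfu : f Finset.univ = chiS G Set.univ := by
    simp [f, Gᶜ.iUnion_connectedComponentSupp]
  let p : Fin #P → Finset Gᶜ.ConnectedComponent := fun i => P.equivFin.symm i
  have hp {i j} (hij : i ≠ j) : Disjoint (p i) (p j) :=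
    hP (P.equivFin.symm i).2 (P.equivFin.symm j).2 (by simpa [Subtype.coe_inj] using hij)
  refine ⟨#P, fun i => ⋃ C ∈ p i, C.supp, rpow_neg_half_le_of_one_lt_mul hy0 hy ?_,
    fun i j hij => disjoint_biUnion_supp (hp hij),
    fun i j hij a ha b hb => adj_of_mem_biUnion_supp (hp hij) ha hb,
    fun i => hPt _ (P.equivFin.symm i).2⟩
  rw [hfu] at hlt
  have hc_pos : (0 : ℝ) < chiS G Set.univ := by exact_mod_cast hc
  nlinarith
end

section
/- Let k, ℓ ≥ 1 be integers, r_1, …, r_ℓ > 0, and let G be a P5-free graph with nonempty disjoint sets A_1, …, A_ℓ, B_1, …, B_k ⊆ V(G) such that: B_1, …, B_k are pairwise anticomplete and each G[B_i] is anticonnected; no vertex of A_1 ∪ ⋯ ∪ A_ℓ is mixed on two of the B_i; and χ(A_j \ N_G(v)) ≤ r_j for all j ∈ [ℓ] and all v ∈ B_1 ∪ ⋯ ∪ B_k. Then either (a) there exist i ∈ [k] and I ⊆ [ℓ] with |I| ≥ (1 − k^{−1/2})·ℓ such that for all j ∈ I there exists A_j' ⊆ A_j complete to B_i with χ(A_j')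 ≥ (1 − 1/k)·χ(A_j) − k·r_j, or (b) some G[A_j] contains a complete blockade (D_1, …, D_q) with q ≥ k^{1/2} and χ(D_i) ≥ χ(A_j)/k for all i ∈ [q]. -/
/-!
Fix `j` and `i`. Every vertex of `A_j` is complete to `B_i`, or anticomplete to some `B_{i'}`, or
mixed on `B_i` and then (being mixed on no other `B_{i'}`) complete to all other `B_{i'}`. Each
anticomplete part lies in some `A_j \ N(v)`, so `χ(A_j) ≤ χ(complete) + χ(mixed) + k r_j`.
In a `P5`-free graph the mixed parts for different `i` are complete to each other. Call `i` bad
for `j` if its mixed part has `χ > χ(A_j) / k`. If some `j` has `√k` bad indices, their mixed parts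
form the blockade of (b); otherwise averaging over `j` gives an `i` bad for at most `ℓ / √k`
indices `j`, and for the remaining `j` the complete part serves as `A_j'` in (a).
-/

open SimpleGraph

/-- A graph is `P5`-free if it has no induced subgraph isomorphic to the five-vertex path. -/
def P5Free {V : Type*} (G : SimpleGraph V) : Prop :=
  IsEmpty (SimpleGraph.pathGraph 5 ↪g G)

/-- `v` is mixed on `S`: it has both a neighbour and a nonneighbour in `S`. -/
def MixedOn {V : Type*} (G : SimpleGraph V) (v : V) (S : Set V) : Prop :=
  (∃ s ∈ S, G.Adj v s) ∧ (∃ s ∈ S, ¬ G.Adj v s)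

open Finset

namespace SimpleGraph

variable {V : Type*} {G : SimpleGraph V}

theorem not_p5Free_of_adj_iff (f : Fin 5 → V)
    (hf : ∀ s t, G.Adj (f s) (f t) ↔ (pathGraph 5).Adj s t) : ¬ P5Free G := by
  -- distinct vertices of the path have distinct neighbourhoods, so `f` is injective
  have separated : ∀ s t : Fin 5, s ≠ t →
      ∃ u, ¬((pathGraph 5).Adj s u ↔ (pathGraph 5).Adj t u) := by
    simp only [pathGraph_adj]; decide
  have hinj : f.Injective := by
    intro s t hst
    by_contra hne
    obtain ⟨u, hu⟩ := separated s t hne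
    exact hu (by rw [← hf, ← hf, hst])
  exact fun h => h.false ⟨⟨f, hinj⟩, hf _ _⟩

theorem not_p5Free_of_isInducedPath {v₀ v₁ v₂ v₃ v₄ : V}
    (h01 : G.Adj v₀ v₁) (h12 : G.Adj v₁ v₂) (h23 : G.Adj v₂ v₃) (h34 : G.Adj v₃ v₄)
    (n02 : ¬ G.Adj v₀ v₂) (n03 : ¬ G.Adj v₀ v₃) (n04 : ¬ G.Adj v₀ v₄)
    (n13 : ¬ G.Adj v₁ v₃) (n14 : ¬ G.Adj v₁ v₄) (n24 : ¬ G.Adj v₂ v₄) : ¬ P5Free G := by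
  refine not_p5Free_of_adj_iff ![v₀, v₁, v₂, v₃, v₄] fun s t => ?_
  fin_cases s <;> fin_cases t <;>
    simp [pathGraph_adj, h01, h12, h23, h34, n02, n03, n04, n13, n14, n24, h01.symm, h12.symm,
      h23.symm, h34.symm, mt G.adj_symm n02, mt G.adj_symm n03, mt G.adj_symm n04,
      mt G.adj_symm n13, mt G.adj_symm n14, mt G.adj_symm n24]

theorem MixedOn.exists_nonadj_of_connected_compl {a : V} {B : Set V} (ha : MixedOn G a B)
    (hB : (G.induce B)ᶜ.Connected) :
    ∃ b ∈ B, ∃ b' ∈ B, ¬ G.Adj b b' ∧ G.Adj a b ∧ ¬ G.Adj a b' := by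
  obtain ⟨⟨b, hb, hab⟩, ⟨b', hb', hab'⟩⟩ := ha
  obtain ⟨w⟩ := hB.preconnected ⟨b, hb⟩ ⟨b', hb'⟩
  obtain ⟨d, -, hd, hd'⟩ := w.exists_boundary_dart {x | G.Adj a x} hab hab'
  exact ⟨d.fst, d.fst.2, d.snd, d.snd.2, ((compl_adj _ _ _).1 d.adj).2, hd, hd'⟩

/-- Otherwise `b' a' b a c` is an induced `P5`, where `b, b' ∈ B` are nonadjacent with `a ~ b`,
`a ≁ b'` (they exist as `B` is anticonnected) and `c ∈ B'` is a nonneighbour of `a'`. -/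
theorem adj_of_mixedOn_of_forall_adj (hP5 : P5Free G) {B B' : Set V}
    (hBB' : ∀ b ∈ B, ∀ b' ∈ B', ¬ G.Adj b b') (hB : (G.induce B)ᶜ.Connected) {a a' : V}
    (ha : MixedOn G a B) (haB' : ∀ c ∈ B', G.Adj a c) (ha'B : ∀ b ∈ B, G.Adj a' b)
    (ha'B' : ∃ c ∈ B', ¬ G.Adj a' c) : G.Adj a a' := by
  obtain ⟨b, hb, b', hb', hbb', hab, hab'⟩ := ha.exists_nonadj_of_connected_compl hB
  obtain ⟨c, hc, ha'c⟩ := ha'B'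
  by_contra haa'
  exact not_p5Free_of_isInducedPath (ha'B b' hb').symm (ha'B b hb) hab.symm (haB' c hc)
    (mt G.adj_symm hbb') (mt G.adj_symm hab') (hBB' b' hb' c hc) (mt G.adj_symm haa') ha'c
    (hBB' b hb c hc) hP5

theorem disjoint_of_forall_adj {S T : Set V} (h : ∀ a ∈ S, ∀ b ∈ T, G.Adj a b) :
    Disjoint S T :=
  Set.disjoint_left.2 fun a haS haT => G.irrefl (h a haS a haT)

section Chromatic

theorem Colorable.induce_union {S T : Set V} {m n : ℕ} (hS : (G.induce S).Colorable m)
    (hT : (G.induce T).Colorable n) : (G.induce (S ∪ T)).Colorable (m + n) := by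
  classical
  obtain ⟨f⟩ := hS
  obtain ⟨g⟩ := hT
  let C : (G.induce (S ∪ T)).Coloring (Fin m ⊕ Fin n) := Coloring.mk
    (fun x => if hx : (x : V) ∈ S then .inl (f ⟨x, hx⟩) else .inr (g ⟨x, x.2.resolve_left hx⟩))
    fun {x y} hxy => by
      by_cases hx : (x : V) ∈ S <;> by_cases hy : (y : V) ∈ S <;>
        simp only [hx, hy, dite_true, dite_false, ne_eq, reduceCtorEq, Sum.inl.injEq,
          Sum.inr.injEq, not_false_eq_true]
      · exact f.valid hxy
      · exact g.valid hxy
  simpa using C.colorable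

variable [Fintype V]

theorem chiS_le_of_colorable {S : Set V} {n : ℕ} (h : (G.induce S).Colorable n) :
    chiS G S ≤ n := by
  simpa [chiS] using ENat.toNat_le_toNat h.chromaticNumber_le (by simp)

theorem colorable_chiS (S : Set V) : (G.induce S).Colorable (chiS G S) :=
  colorable_chromaticNumber_of_fintype _

theorem chiS_mono {S T : Set V} (h : S ⊆ T) : chiS G S ≤ chiS G T :=
  chiS_le_of_colorable ((colorable_chiS T).of_hom (G.induceHomOfLE h).toHom)

theorem chiS_union_le (S T : Set V) : chiS G (S ∪ T) ≤ chiS G S + chiS G T :=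
  chiS_le_of_colorable ((colorable_chiS S).induce_union (colorable_chiS T))

theorem chiS_empty : chiS G (∅ : Set V) = 0 := by
  simp [chiS, chromaticNumber_eq_zero_of_isEmpty]

theorem chiS_biUnion_le {ι : Type*} (s : Finset ι) (f : ι → Set V) :
    chiS G (⋃ i ∈ s, f i) ≤ ∑ i ∈ s, chiS G (f i) := by
  classical
  induction s using Finset.induction with
  | empty => simp [chiS_empty]
  | insert a s ha ih =>
    rw [Finset.set_biUnion_insert, Finset.sum_insert ha]
    exact (chiS_union_le _ _).trans (Nat.add_le_add_left ih _)

theorem chiS_iUnion_le {ι : Type*} [Fintype ι] (f : ι → Set V) :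
    chiS G (⋃ i, f i) ≤ ∑ i, chiS G (f i) := by
  simpa using chiS_biUnion_le (G := G) univ f

end Chromatic

section Parts

variable (G) {ι : Type*}

def completeTo (A B : Set V) : Set V := {a ∈ A | ∀ b ∈ B, G.Adj a b}

def anticompleteTo (A B : Set V) : Set V := {a ∈ A | ∀ b ∈ B, ¬ G.Adj a b}

def mixedOnlyOn (A : Set V) (Bf : ι → Set V) (i : ι) : Set V :=
  {a ∈ A | MixedOn G a (Bf i) ∧ ∀ i', i' ≠ i → ∀ b ∈ Bf i', G.Adj a b}

variable {G}

theorem anticompleteTo_subset_diff_neighborSet {A B : Set V} {v : V} (hv : v ∈ B) :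
    anticompleteTo G A B ⊆ A \ G.neighborSet v :=
  fun _ ha => ⟨ha.1, fun hav => ha.2 v hv hav.symm⟩

theorem subset_completeTo_union_mixedOnlyOn {A : Set V} {Bf : ι → Set V}
    (hmix : ∀ a ∈ A, ∀ i i', i ≠ i' → ¬ (MixedOn G a (Bf i) ∧ MixedOn G a (Bf i'))) (i : ι) :
    A ⊆ completeTo G A (Bf i) ∪ mixedOnlyOn G A Bf i ∪ ⋃ i', anticompleteTo G A (Bf i') := by
  intro a ha
  by_cases hanti : ∃ i', ∀ b ∈ Bf i', ¬ G.Adj a b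
  · obtain ⟨i', hi'⟩ := hanti
    exact Or.inr (Set.mem_iUnion.2 ⟨i', ha, hi'⟩)
  push Not at hanti
  by_cases hcomp : ∀ b ∈ Bf i, G.Adj a b
  · exact Or.inl (Or.inl ⟨ha, hcomp⟩)
  push Not at hcomp
  refine Or.inl (Or.inr ⟨ha, ⟨hanti i, hcomp⟩, fun i' hi' b hb => ?_⟩)
  by_contra hab
  exact hmix a ha i' i hi' ⟨⟨hanti i', b, hb, hab⟩, hanti i, hcomp⟩

theorem chiS_le_completeTo_add_mixedOnlyOn [Fintype V] [Fintype ι] {A : Set V}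
    {Bf : ι → Set V} {r : ℝ}
    (hmix : ∀ a ∈ A, ∀ i i', i ≠ i' → ¬ (MixedOn G a (Bf i) ∧ MixedOn G a (Bf i')))
    (hBne : ∀ i, (Bf i).Nonempty)
    (hcov : ∀ i, ∀ v ∈ Bf i, (chiS G (A \ G.neighborSet v) : ℝ) ≤ r) (i : ι) :
    (chiS G A : ℝ) ≤
      chiS G (completeTo G A (Bf i)) + chiS G (mixedOnlyOn G A Bf i) + Fintype.card ι * r := by
  have hanti : ∀ i', (chiS G (anticompleteTo G A (Bf i')) : ℝ) ≤ r := fun i' => by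
    obtain ⟨v, hv⟩ := hBne i'
    exact le_trans (by exact_mod_cast chiS_mono (anticompleteTo_subset_diff_neighborSet hv))
      (hcov i' v hv)
  calc (chiS G A : ℝ)
      ≤ chiS G (completeTo G A (Bf i) ∪ mixedOnlyOn G A Bf i ∪
          ⋃ i', anticompleteTo G A (Bf i')) := by
        exact_mod_cast chiS_mono (subset_completeTo_union_mixedOnlyOn hmix i)
    _ ≤ chiS G (completeTo G A (Bf i)) + chiS G (mixedOnlyOn G A Bf i) +
          ∑ i', chiS G (anticompleteTo G A (Bf i')) := by
        exact_mod_cast (chiS_union_le _ _).trans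
          (Nat.add_le_add (chiS_union_le _ _) (chiS_iUnion_le _))
    _ ≤ chiS G (completeTo G A (Bf i)) + chiS G (mixedOnlyOn G A Bf i) + ∑ _i' : ι, r := by
        push_cast
        gcongr with i'
        exact hanti i'
    _ = _ := by simp

theorem mixedOnlyOn_adj (hP5 : P5Free G) {A : Set V} {Bf : ι → Set V}
    (hanti : ∀ i i', i ≠ i' → ∀ a ∈ Bf i, ∀ b ∈ Bf i', ¬ G.Adj a b)
    (hanticonn : ∀ i, ((G.induce (Bf i))ᶜ).Connected) {i i' : ι} (hii' : i ≠ i') :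
    ∀ a ∈ mixedOnlyOn G A Bf i, ∀ a' ∈ mixedOnlyOn G A Bf i', G.Adj a a' :=
  fun _ ha _ ha' => adj_of_mixedOn_of_forall_adj hP5 (hanti i i' hii') (hanticonn i) ha.2.1
    (ha.2.2 i' hii'.symm) (ha'.2.2 i hii') ha'.2.1.2

end Parts

end SimpleGraph

theorem Finset.exists_le_card_filter_notMem {ι κ : Type*} [Fintype ι] [Fintype κ] [Nonempty κ]
    [DecidableEq κ] (bad : ι → Finset κ) {s : ℝ} (hs : ∀ j, (#(bad j) : ℝ) ≤ s) :
    ∃ i, (1 - s / Fintype.card κ) * Fintype.card ι ≤ #{j | i ∉ bad j} := by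
  have hcount : ∑ i, #{j | i ∈ bad j} = ∑ j, #(bad j) := by
    simp only [card_filter]; rw [sum_comm]; simp
  obtain ⟨i, -, hi⟩ := exists_le_of_sum_le (univ_nonempty (α := κ))
    (f := fun i => (#{j | i ∈ bad j} : ℝ)) (g := fun _ => s * Fintype.card ι / Fintype.card κ)
    (by
      calc ∑ i, (#{j | i ∈ bad j} : ℝ) = ∑ j, (#(bad j) : ℝ) := by exact_mod_cast hcount
        _ ≤ ∑ _j : ι, s := sum_le_sum fun j _ => hs j
        _ = _ := by simp only [sum_const, card_univ, nsmul_eq_mul]; field_simp)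
  refine ⟨i, ?_⟩
  have hsplit := card_filter_add_card_filter_not (s := univ) (fun j => i ∈ bad j)
  rw [card_univ] at hsplit
  have : (#{j | i ∈ bad j} : ℝ) + #{j | i ∉ bad j} = Fintype.card ι := by exact_mod_cast hsplit
  have : (1 - s / Fintype.card κ) * Fintype.card ι =
      Fintype.card ι - s * Fintype.card ι / Fintype.card κ := by ring
  linarith

theorem stmt_10_general {V : Type*} [Fintype V] (G : SimpleGraph V) (hP5 : P5Free G)
    (k ℓ : ℕ) (hk : 1 ≤ k)
    (rf : Fin ℓ → ℝ)
    (Af : Fin ℓ → Set V) (Bf : Fin k → Set V)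
    (hBne : ∀ i, (Bf i).Nonempty)
    (hanti : ∀ i i', i ≠ i' → ∀ a ∈ Bf i, ∀ b ∈ Bf i', ¬ G.Adj a b)
    (hanticonn : ∀ i, ((G.induce (Bf i))ᶜ).Connected)
    (hmix : ∀ j : Fin ℓ, ∀ a ∈ Af j, ∀ i i', i ≠ i' →
      ¬ (MixedOn G a (Bf i) ∧ MixedOn G a (Bf i')))
    (hcov : ∀ j : Fin ℓ, ∀ i : Fin k, ∀ v ∈ Bf i,
      (chiS G (Af j \ G.neighborSet v) : ℝ) ≤ rf j) :
    (∃ i : Fin k, ∃ I : Finset (Fin ℓ),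
      (1 - 1 / Real.sqrt k) * (ℓ : ℝ) ≤ (I.card : ℝ) ∧
      ∀ j ∈ I, ∃ A' ⊆ Af j, (∀ a ∈ A', ∀ b ∈ Bf i, G.Adj a b) ∧
        (1 - 1 / (k : ℝ)) * (chiS G (Af j) : ℝ) - k * rf j ≤ (chiS G A' : ℝ)) ∨
    (∃ j : Fin ℓ, ∃ (q : ℕ) (D : Fin q → Set V), Real.sqrt k ≤ (q : ℝ) ∧
      (∀ i, D i ⊆ Af j) ∧
      (∀ i i', i ≠ i' → Disjoint (D i) (D i')) ∧
      (∀ i i', i ≠ i' → ∀ a ∈ D i, ∀ b ∈ D i', G.Adj a b) ∧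
      ∀ i, (chiS G (Af j) : ℝ) / k ≤ (chiS G (D i) : ℝ)) := by
  classical
  let M j i := mixedOnlyOn G (Af j) Bf i
  let bad j : Finset (Fin k) := {i | (chiS G (Af j) : ℝ) / k < chiS G (M j i)}
  by_cases hbig : ∃ j, Real.sqrt k ≤ #(bad j)
  · obtain ⟨j, hj⟩ := hbig
    have hadj {t t' : Fin #(bad j)} (h : t ≠ t') : ∀ a ∈ M j ((bad j).equivFin.symm t),
        ∀ b ∈ M j ((bad j).equivFin.symm t'), G.Adj a b :=
      mixedOnlyOn_adj hP5 hanti hanticonn fun h' => h ((bad j).equivFin.symm.injective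
        (Subtype.ext h'))
    refine Or.inr ⟨j, #(bad j), fun t => M j ((bad j).equivFin.symm t), hj,
      fun t => Set.sep_subset _ _, fun t t' h => disjoint_of_forall_adj (hadj h),
      fun t t' h => hadj h, fun t => ?_⟩
    exact (mem_filter.1 ((bad j).equivFin.symm t).2).2.le
  · push Not at hbig
    have : Nonempty (Fin k) := ⟨⟨0, hk⟩⟩
    obtain ⟨i, hi⟩ := exists_le_card_filter_notMem bad fun j => (hbig j).le
    simp only [Fintype.card_fin, Real.sqrt_div_self'] at hi
    refine Or.inl ⟨i, ({j | i ∉ bad j} : Finset (Fin ℓ)), hi, fun j hj =>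
      ⟨completeTo G (Af j) (Bf i), Set.sep_subset _ _, fun a ha => ha.2, ?_⟩⟩
    have hM : (chiS G (M j i) : ℝ) ≤ chiS G (Af j) / k := by
      simpa [bad] using (mem_filter.1 hj).2
    have hsplit := chiS_le_completeTo_add_mixedOnlyOn (hmix j) hBne (hcov j) i
    rw [Fintype.card_fin] at hsplit
    have : (1 - 1 / (k : ℝ)) * chiS G (Af j) = chiS G (Af j) - chiS G (Af j) / k := by ring
    linarith

theorem stmt_10 {V : Type*} [Fintype V] (G : SimpleGraph V) (hP5 : P5Free G)
    (k ℓ : ℕ) (hk : 1 ≤ k) (hℓ : 1 ≤ ℓ)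
    (rf : Fin ℓ → ℝ) (hrf : ∀ j, 0 < rf j)
    (Af : Fin ℓ → Set V) (Bf : Fin k → Set V)
    (hAne : ∀ j, (Af j).Nonempty) (hBne : ∀ i, (Bf i).Nonempty)
    (hdAA : ∀ j j', j ≠ j' → Disjoint (Af j) (Af j'))
    (hdAB : ∀ j i, Disjoint (Af j) (Bf i))
    (hdBB : ∀ i i', i ≠ i' → Disjoint (Bf i) (Bf i'))
    (hanti : ∀ i i', i ≠ i' → ∀ a ∈ Bf i, ∀ b ∈ Bf i', ¬ G.Adj a b)
    (hanticonn : ∀ i, ((G.induce (Bf i))ᶜ).Connected)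
    (hmix : ∀ j : Fin ℓ, ∀ a ∈ Af j, ∀ i i', i ≠ i' →
      ¬ (MixedOn G a (Bf i) ∧ MixedOn G a (Bf i')))
    (hcov : ∀ j : Fin ℓ, ∀ i : Fin k, ∀ v ∈ Bf i,
      (chiS G (Af j \ G.neighborSet v) : ℝ) ≤ rf j) :
    (∃ i : Fin k, ∃ I : Finset (Fin ℓ),
      (1 - 1 / Real.sqrt k) * (ℓ : ℝ) ≤ (I.card : ℝ) ∧
      ∀ j ∈ I, ∃ A' ⊆ Af j, (∀ a ∈ A', ∀ b ∈ Bf i, G.Adj a b) ∧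
        (1 - 1 / (k : ℝ)) * (chiS G (Af j) : ℝ) - k * rf j ≤ (chiS G A' : ℝ)) ∨
    (∃ j : Fin ℓ, ∃ (q : ℕ) (D : Fin q → Set V), Real.sqrt k ≤ (q : ℝ) ∧
      (∀ i, D i ⊆ Af j) ∧
      (∀ i i', i ≠ i' → Disjoint (D i) (D i')) ∧
      (∀ i i', i ≠ i' → ∀ a ∈ D i, ∀ b ∈ D i', G.Adj a b) ∧
      ∀ i, (chiS G (Af j) : ℝ) / k ≤ (chiS G (D i) : ℝ)) :=
  stmt_10_general G hP5 k ℓ hk rf Af Bf hBne hanti hanticonn hmix hcov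
end

section
/- Let G be a P5-free graph containing an anticomplete pair (A,B) with nonempty A, B such that G[A] and G[B] are connected components of G \ S, where S is a minimal cutset separating A and B in the connected graph G. Then every vertex of S is complete to A or complete to B, and consequently there is a vertex v ∈ S with χ(N_G(v)) ≥ min(χ(A), χ(B)). -/
open SimpleGraph

/-!
A vertex `s` with neighbours in both of two anticomplete connected sets `A` and `B`, but
non-neighbours in each, sees an edge `a₁a₂` of `A` at exactly one end and an edge `b₁b₂` of `B`
at exactly one end; then `a₂ a₁ s b₁ b₂` is an induced `P5`. Minimality of the cutset `S` gives
every `s ∈ S` neighbours in both `A` and `B`, so in a `P5`-free graph each `s ∈ S` is complete to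
`A` or to `B`, and `N(s)` contains `A` or `B`. Connectivity of `G` makes `S` nonempty.
-/

namespace SimpleGraph

variable {V W : Type*} {G : SimpleGraph V}

/-- Injectivity comes for free when distinct vertices of `H` have distinct neighbourhoods. -/
def Embedding.ofAdjIff {H : SimpleGraph W} (f : W → V)
    (hf : ∀ i j, G.Adj (f i) (f j) ↔ H.Adj i j)
    (htwin : ∀ i j, (∀ k, H.Adj k i ↔ H.Adj k j) → i = j) : H ↪g G where
  toFun := f
  inj' i j hij := htwin i j fun k => by rw [← hf, ← hf, hij]
  map_rel_iff' := hf _ _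

lemma pathGraph_five_eq_of_adj_iff :
    ∀ i j : Fin 5, (∀ k, (pathGraph 5).Adj k i ↔ (pathGraph 5).Adj k j) → i = j := by
  simp only [pathGraph_adj]
  decide

lemma exists_adj_mem_notMem_of_preconnected_induce {A : Set V}
    (hA : (G.induce A).Preconnected) (P : Set V) {x y : V} (hx : x ∈ A) (hy : y ∈ A)
    (hxP : x ∈ P) (hyP : y ∉ P) : ∃ u ∈ A, ∃ v ∈ A, G.Adj u v ∧ u ∈ P ∧ v ∉ P := by
  obtain ⟨p⟩ := hA ⟨x, hx⟩ ⟨y, hy⟩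
  obtain ⟨d, -, hd₁, hd₂⟩ := p.exists_boundary_dart {z | z.1 ∈ P} hxP hyP
  exact ⟨d.fst, d.fst.2, d.snd, d.snd.2, by simpa using d.adj, hd₁, hd₂⟩

/-- A walk that leaves `A` while avoiding `S \ {s}` must step from `A` to `s`, since all other
neighbours of `A` outside `A` lie in `S`. -/
lemma exists_adj_of_reachable_induce_compl_diff_singleton {A S : Set V} {s : V}
    (hAcomp : ∀ a ∈ A, ∀ w, w ∉ S → w ∉ A → ¬ G.Adj a w) {x y : ↥((S \ {s})ᶜ : Set V)}
    (hxy : (G.induce ((S \ {s})ᶜ : Set V)).Reachable x y) (hx : (x : V) ∈ A)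
    (hy : (y : V) ∉ A) : ∃ a ∈ A, G.Adj s a := by
  obtain ⟨p⟩ := hxy
  obtain ⟨d, -, hd₁, hd₂⟩ := p.exists_boundary_dart {z | z.1 ∈ A} hx hy
  have hadj : G.Adj d.fst d.snd := by simpa using d.adj
  have hS : (d.snd : V) ∈ S := by
    by_contra hS
    exact hAcomp _ hd₁ _ hS hd₂ hadj
  have hs : (d.snd : V) = s := by
    have := d.snd.2
    simp only [Set.mem_compl_iff, Set.mem_sdiff, Set.mem_singleton_iff, not_and_not_right] at this
    exact this hS
  rw [hs] at hadj
  exact ⟨d.fst, hd₁, hadj.symm⟩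

lemma exists_adj_of_minimal_cutset {A B S : Set V} (hAB : Disjoint A B)
    (hmin : ∀ S' : Set V, S' ⊂ S →
      ∃ (a b : ↥(S'ᶜ : Set V)), (a : V) ∈ A ∧ (b : V) ∈ B ∧
        (G.induce (S'ᶜ : Set V)).Reachable a b)
    (hAcomp : ∀ a ∈ A, ∀ w, w ∉ S → w ∉ A → ¬ G.Adj a w)
    (hBcomp : ∀ b ∈ B, ∀ w, w ∉ S → w ∉ B → ¬ G.Adj b w) {s : V} (hs : s ∈ S) :
    (∃ a ∈ A, G.Adj s a) ∧ ∃ b ∈ B, G.Adj s b := by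
  obtain ⟨a, b, ha, hb, hab⟩ := hmin (S \ {s}) (Set.sdiff_singleton_ssubset.mpr hs)
  exact ⟨exists_adj_of_reachable_induce_compl_diff_singleton hAcomp hab ha
      (hAB.notMem_of_mem_right hb),
    exists_adj_of_reachable_induce_compl_diff_singleton hBcomp hab.symm hb
      (hAB.notMem_of_mem_left ha)⟩

lemma nonempty_of_connected_of_separates {A B S : Set V} (hconn : G.Connected)
    {a b : V} (ha : a ∈ A) (hb : b ∈ B)
    (hsep : ∀ (a b : ↥(Sᶜ : Set V)), (a : V) ∈ A → (b : V) ∈ B →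
      ¬ (G.induce (Sᶜ : Set V)).Reachable a b) : S.Nonempty := by
  rw [Set.nonempty_iff_ne_empty]
  rintro rfl
  let toInduce : G →g G.induce ((∅ : Set V)ᶜ) := ⟨fun v => ⟨v, by simp⟩, fun h => by simpa using h⟩
  exact hsep ⟨a, by simp⟩ ⟨b, by simp⟩ ha hb ((hconn.preconnected a b).map toInduce)

end SimpleGraph

lemma P5Free.false_of_induced_path {V : Type*} {G : SimpleGraph V} (hG : P5Free G)
    {v₀ v₁ v₂ v₃ v₄ : V}
    (h01 : G.Adj v₀ v₁) (h12 : G.Adj v₁ v₂) (h23 : G.Adj v₂ v₃) (h34 : G.Adj v₃ v₄)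
    (n02 : ¬ G.Adj v₀ v₂) (n03 : ¬ G.Adj v₀ v₃) (n04 : ¬ G.Adj v₀ v₄)
    (n13 : ¬ G.Adj v₁ v₃) (n14 : ¬ G.Adj v₁ v₄) (n24 : ¬ G.Adj v₂ v₄) : False := by
  have hadj : ∀ i j : Fin 5, G.Adj (![v₀, v₁, v₂, v₃, v₄] i) (![v₀, v₁, v₂, v₃, v₄] j) ↔
      (pathGraph 5).Adj i j := by
    intro i j
    fin_cases i <;> fin_cases j <;> simp [pathGraph_adj, adj_comm, *]
  exact hG.false (Embedding.ofAdjIff _ hadj pathGraph_five_eq_of_adj_iff)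

theorem P5Free.complete_or_complete {V : Type*} {G : SimpleGraph V} (hG : P5Free G)
    {A B : Set V} (hanti : ∀ a ∈ A, ∀ b ∈ B, ¬ G.Adj a b)
    (hA : (G.induce A).Preconnected) (hB : (G.induce B).Preconnected) {s : V}
    (hsA : ∃ a ∈ A, G.Adj s a) (hsB : ∃ b ∈ B, G.Adj s b) :
    (∀ a ∈ A, G.Adj s a) ∨ ∀ b ∈ B, G.Adj s b := by
  by_contra! ⟨⟨a, ha, hsa⟩, b, hb, hsb⟩
  obtain ⟨a', ha', hsa'⟩ := hsA
  obtain ⟨b', hb', hsb'⟩ := hsB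
  obtain ⟨a₁, ha₁, a₂, ha₂, ha₁₂, hsa₁, hsa₂⟩ :=
    exists_adj_mem_notMem_of_preconnected_induce hA (G.neighborSet s) ha' ha hsa' hsa
  obtain ⟨b₁, hb₁, b₂, hb₂, hb₁₂, hsb₁, hsb₂⟩ :=
    exists_adj_mem_notMem_of_preconnected_induce hB (G.neighborSet s) hb' hb hsb' hsb
  exact hG.false_of_induced_path ha₁₂.symm hsa₁.symm hsb₁ hb₁₂ (fun h => hsa₂ h.symm)
    (hanti _ ha₂ _ hb₁) (hanti _ ha₂ _ hb₂) (hanti _ ha₁ _ hb₁) (hanti _ ha₁ _ hb₂) hsb₂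

lemma chiS_mono {V : Type*} [Fintype V] (G : SimpleGraph V) {X Y : Set V} (h : X ⊆ Y) :
    chiS G X ≤ chiS G Y := by
  classical
  exact ENat.toNat_le_toNat (chromaticNumber_mono_of_hom (G.induceHomOfLE h).toHom)
    (chromaticNumber_ne_top_iff_exists.mpr ⟨_, colorable_of_fintype _⟩)

theorem stmt_15_general {V : Type*} [Fintype V] (G : SimpleGraph V) (hP5 : P5Free G)
    (hconn : G.Connected)
    (A B S : Set V) (hA : A.Nonempty) (hB : B.Nonempty)
    (hAB : Disjoint A B)
    (hanti : ∀ a ∈ A, ∀ b ∈ B, ¬ G.Adj a b)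
    -- `S` separates `A` and `B` in `G`
    (hsep : ∀ (a b : ↥(Sᶜ : Set V)), (a : V) ∈ A → (b : V) ∈ B →
      ¬ (G.induce (Sᶜ : Set V)).Reachable a b)
    -- `S` is a minimal such cutset
    (hmin : ∀ S' : Set V, S' ⊂ S →
      ∃ (a b : ↥(S'ᶜ : Set V)), (a : V) ∈ A ∧ (b : V) ∈ B ∧
        (G.induce (S'ᶜ : Set V)).Reachable a b)
    -- `G[A]` and `G[B]` are connected components of `G \ S`
    (hAconn : (G.induce A).Connected) (hBconn : (G.induce B).Connected)
    (hAcomp : ∀ a ∈ A, ∀ w, w ∉ S → w ∉ A → ¬ G.Adj a w)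
    (hBcomp : ∀ b ∈ B, ∀ w, w ∉ S → w ∉ B → ¬ G.Adj b w) :
    (∀ s ∈ S, (∀ a ∈ A, G.Adj s a) ∨ (∀ b ∈ B, G.Adj s b)) ∧
    ∃ v ∈ S, min (chiS G A) (chiS G B) ≤ chiS G (G.neighborSet v) := by
  have hpure : ∀ s ∈ S, (∀ a ∈ A, G.Adj s a) ∨ (∀ b ∈ B, G.Adj s b) := fun s hs =>
    have ⟨hsA, hsB⟩ := exists_adj_of_minimal_cutset hAB hmin hAcomp hBcomp hs
    hP5.complete_or_complete hanti hAconn.preconnected hBconn.preconnected hsA hsB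
  refine ⟨hpure, ?_⟩
  obtain ⟨s, hs⟩ := nonempty_of_connected_of_separates hconn hA.some_mem hB.some_mem hsep
  refine ⟨s, hs, ?_⟩
  rcases hpure s hs with hsA | hsB
  · exact (min_le_left _ _).trans (chiS_mono G hsA)
  · exact (min_le_right _ _).trans (chiS_mono G hsB)

theorem stmt_15 {V : Type*} [Fintype V] (G : SimpleGraph V) (hP5 : P5Free G)
    (hconn : G.Connected)
    (A B S : Set V) (hA : A.Nonempty) (hB : B.Nonempty)
    (hAB : Disjoint A B) (hAS : Disjoint A S) (hBS : Disjoint B S)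
    (hanti : ∀ a ∈ A, ∀ b ∈ B, ¬ G.Adj a b)
    -- `S` separates `A` and `B` in `G`
    (hsep : ∀ (a b : ↥(Sᶜ : Set V)), (a : V) ∈ A → (b : V) ∈ B →
      ¬ (G.induce (Sᶜ : Set V)).Reachable a b)
    -- `S` is a minimal such cutset
    (hmin : ∀ S' : Set V, S' ⊂ S →
      ∃ (a b : ↥(S'ᶜ : Set V)), (a : V) ∈ A ∧ (b : V) ∈ B ∧
        (G.induce (S'ᶜ : Set V)).Reachable a b)
    -- `G[A]` and `G[B]` are connected components of `G \ S`
    (hAconn : (G.induce A).Connected) (hBconn : (G.induce B).Connected)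
    (hAcomp : ∀ a ∈ A, ∀ w, w ∉ S → w ∉ A → ¬ G.Adj a w)
    (hBcomp : ∀ b ∈ B, ∀ w, w ∉ S → w ∉ B → ¬ G.Adj b w) :
    (∀ s ∈ S, (∀ a ∈ A, G.Adj s a) ∨ (∀ b ∈ B, G.Adj s b)) ∧
    ∃ v ∈ S, min (chiS G A) (chiS G B) ≤ chiS G (G.neighborSet v) :=
  stmt_15_general G hP5 hconn A B S hA hB hAB hanti hsep hmin hAconn hBconn hAcomp hBcomp
end
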